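/- Let (L, g) be a dg Lie algebra pair with quotient B = L/g, and let j, j' = j + λ be two linear splittings of L → B, where λ : B → g. Let f = f₀ + f₁ and f' = f₀' + f₁' be the associated weak Loday–Pirashvili modules B[-1] ⇝ g. Then the C(g)-linear extension h of the map B[-1] → g[-1], b[-1] ↦ λ(b)[-1], satisfies F − F' = d_tot^g ∘ h + h ∘ d_tot^B; hence the weak Loday–Pirashvili module associated to a dg Lie algebra pair is independent of the splitting up to homotopy. -/
import Mathlib


/-!
STATEMENT 16: Let `(L, g)` be a dg Lie algebra pair with quotient `B = L/g`,
and let `j, j' = j + λ` be two linear splittings of `L → B`, where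
`λ : B → g`.  Let `f = f₀ + f₁` and `f' = f₀' + f₁'` be the associated weak
Loday–Pirashvili modules `B[-1] ⇝ g`.  Then the `C(g)`-linear extension `h` of
`b[-1] ↦ λ(b)[-1]` satisfies `F − F' = d_tot^g ∘ h + h ∘ d_tot^B`; hence the
weak Loday–Pirashvili module associated to a dg Lie algebra pair is
independent of the splitting, up to homotopy.

Modelling conventions are as in STATEMENT 15: `g = ker p` for a surjective
cochain map `p : L → B`, the splittings are sections `s, s' = s + λ` of `p`,
and the homotopy identity `F − F' = d_tot^g ∘ h + h ∘ d_tot^B`, determined on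
the generators `B[-1]`, is expressed by its weight-0 and weight-1 components
(the latter contracted against elements `x ∈ g`).  The sign `(−1)^{m+1}`
in `hmap` accounts for the shift `B[-1]`.
-/

namespace Stmt16

variable {K : Type} [Field K]

/-- Transport along an equality of degrees. -/
def gcast {F : ℤ → Type} [∀ i, AddCommGroup (F i)] [∀ i, Module K (F i)]
    {i j : ℤ} (h : i = j) : F i →ₗ[K] F j where
  toFun x := h ▸ x
  map_add' x y := by subst h; rfl
  map_smul' c x := by subst h; rfl

/-- The axioms of a differential graded Lie algebra. -/
def IsDGLA (g : ℤ → Type) [∀ i, AddCommGroup (g i)] [∀ i, Module K (g i)]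
    (d : ∀ i, g i →ₗ[K] g (i+1))
    (br : ∀ i j, g i →ₗ[K] g j →ₗ[K] g (i+j)) : Prop :=
  (∀ i (x : g i), d (i+1) (d i x) = 0) ∧
  (∀ i j (x : g i) (y : g j),
    br i j x y = gcast (K := K) (F := g) (show j + i = i + j by ring)
      ((-((-1 : K) ^ (i*j))) • br j i y x)) ∧
  (∀ i j k (x : g i) (y : g j) (z : g k),
    ((-1 : K) ^ (i*k)) • gcast (K := K) (F := g) (show i+(j+k) = i+j+k by ring)
        (br i (j+k) x (br j k y z))
      + ((-1 : K) ^ (j*i)) • gcast (K := K) (F := g) (show j+(k+i) = i+j+k by ring)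
        (br j (k+i) y (br k i z x))
      + ((-1 : K) ^ (k*j)) • gcast (K := K) (F := g) (show k+(i+j) = i+j+k by ring)
        (br k (i+j) z (br i j x y)) = 0) ∧
  (∀ i j (x : g i) (y : g j),
    d (i+j) (br i j x y)
      = gcast (K := K) (F := g) (show i+1+j = i+j+1 by ring) (br (i+1) j (d i x) y)
        + ((-1 : K) ^ i) • gcast (K := K) (F := g) (show i+(j+1) = i+j+1 by ring)
            (br i (j+1) x (d j y)))

variable (L B : ℤ → Type)
  [∀ i, AddCommGroup (L i)] [∀ i, Module K (L i)]
  [∀ i, AddCommGroup (B i)] [∀ i, Module K (B i)]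

/-- `f₀(b) = (−1)^{|b|}(d^L(s(b)) − s(d^B(b)))`. -/
def fzero (dL : ∀ i, L i →ₗ[K] L (i+1)) (dB : ∀ i, B i →ₗ[K] B (i+1))
    (s : ∀ i, B i →ₗ[K] L i) {m : ℤ} (b : B m) : L (m+1) :=
  ((-1 : K) ^ m) • (dL m (s m b) - s (m+1) (dB m b))

/-- `f₁(b)(x) = (−1)^{|b|} pr_g([x, s(b)]_L)`, the `g`-component taken with
respect to the splitting: `pr_g(l) = l − s(p(l))`. -/
def fvalue (br : ∀ i j, L i →ₗ[K] L j →ₗ[K] L (i+j))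
    (p : ∀ i, L i →ₗ[K] B i) (s : ∀ i, B i →ₗ[K] L i)
    {i m : ℤ} (x : L i) (b : B m) : L (i+m) :=
  ((-1 : K) ^ m) • (br i m x (s m b) - s (i+m) (p (i+m) (br i m x (s m b))))

/-- The homotopy `h(b[-1]) = λ(b)[-1]`, realized (with its Koszul sign) as the
degree-preserving map `b ↦ (−1)^{|b|+1} λ(b)` into `g ⊂ L`. -/
def hmap (lam : ∀ i, B i →ₗ[K] L i) {m : ℤ} (b : B m) : L m :=
  ((-1 : K) ^ (m+1)) • lam m b

theorem weak_LP_module_of_pair_independent_of_splitting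
    (dL : ∀ i, L i →ₗ[K] L (i+1))
    (br : ∀ i j, L i →ₗ[K] L j →ₗ[K] L (i+j))
    (hL : IsDGLA (K := K) L dL br)
    (dB : ∀ i, B i →ₗ[K] B (i+1))
    (hdB2 : ∀ i (b : B i), dB (i+1) (dB i b) = 0)
    (p : ∀ i, L i →ₗ[K] B i)
    (hpsurj : ∀ i (b : B i), ∃ l : L i, p i l = b)
    (hpd : ∀ i (l : L i), p (i+1) (dL i l) = dB i (p i l))
    (hgd : ∀ i (x : L i), p i x = 0 → p (i+1) (dL i x) = 0)
    (hgbr : ∀ i j (x : L i) (y : L j),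
      p i x = 0 → p j y = 0 → p (i+j) (br i j x y) = 0)
    -- two splittings `s` and `s' = s + λ`, with `λ` valued in `g`:
    (s s' : ∀ i, B i →ₗ[K] L i)
    (hps : ∀ i (b : B i), p i (s i b) = b)
    (hps' : ∀ i (b : B i), p i (s' i b) = b)
    (lam : ∀ i, B i →ₗ[K] L i)
    (hlam : ∀ i (b : B i), s' i b = s i b + lam i b)
    (hlamg : ∀ i (b : B i), p i (lam i b) = 0) :
    -- Conclusion: `F − F' = d_tot^g ∘ h + h ∘ d_tot^B`.
    -- Weight-0 component:
    (∀ m (b : B m),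
      fzero (K := K) L B dL dB s b - fzero (K := K) L B dL dB s' b
        = dL m (hmap (K := K) L B lam b) + hmap (K := K) L B lam (dB m b))
    -- Weight-1 component, contracted against `x ∈ g i`:
    ∧ (∀ i m (x : L i) (b : B m), p i x = 0 →
      fvalue (K := K) L B br p s x b - fvalue (K := K) L B br p s' x b
        = br i m x (hmap (K := K) L B lam b)
          + ((-1 : K) ^ (i-1)) •
              hmap (K := K) L B lam (p (i+m) (br i m x (s m b)))) := by
  have hne : (-1:K) ≠ 0 := by norm_num
  constructor
  · intro m b
    simp only [fzero, hmap, hlam, map_add, map_smul]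
    have h1 : ((-1:K)^(m+1)) = (-1) * (-1:K)^m := by
      rw [zpow_add₀ hne]; ring
    have h2 : ((-1:K)^(m+1+1)) = (-1:K)^m := by
      rw [zpow_add₀ hne, zpow_add₀ hne]; ring
    rw [h1, h2]
    module
  · intro i m x b hx
    have hp0 : p (i+m) (br i m x (lam m b)) = 0 := hgbr i m x (lam m b) hx (hlamg m b)
    simp only [fvalue, hmap, hlam, map_add, map_smul, hp0, add_zero]
    rw [smul_smul]
    have h1 : ((-1:K)^(m+1)) = (-1) * (-1:K)^m := by
      rw [zpow_add₀ hne]; ring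
    have h2 : ((-1:K)^(i-1)) * ((-1:K)^(i+m+1)) = (-1:K)^m := by
      rw [← zpow_add₀ hne]
      have : i - 1 + (i + m + 1) = m + 2*i := by ring
      rw [this, zpow_add₀ hne, zpow_mul]
      norm_num
    rw [h1, h2]
    module

end Stmt16
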